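/- For every n ≥ 2, the NFA M over {0,1} with states {0,...,n-1}, all states both initial and final, and transitions δ(i,0) = {i-1} for 1 ≤ i ≤ n-1, δ(0,0) = {n-1}, δ(i,1) = {i+1} for 0 ≤ i ≤ n-2 (δ(n-1,1) = ∅), has the property that in the subset construction all 2^n subsets are reachable from the initial set Q and are pairwise inequivalent; hence the minimal DFA for L(M) has 2^n states. -/

import Mathlib

/-!
Reading `0` rotates a set of states cyclically down by one, and reading `1` shifts it up by one,
losing the top state `n - 1` and leaving `0` empty. Hence `1 0` deletes exactly the state `n - 1`,
and after rotating any state `x` to the top, deleting it and rotating back, every state can be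
deleted individually; starting from all of `Q` this reaches every subset. Two sets differing at
`x` are separated by `0^x 1^(n-1)`: the rotation moves `x` to `0`, and `1^(n-1)` keeps only what
started at `0`. Subsets being reachable and pairwise inequivalent, any DFA for `L(M)` needs one
state per subset, by Myhill–Nerode.
-/

/-- The NFA of Theorem `allinitial`: states `{0,…,n-1}`, all states both initial and
final, with `δ(i,0) = {i-1}` for `1 ≤ i ≤ n-1`, `δ(0,0) = {n-1}`, and
`δ(i,1) = {i+1}` for `0 ≤ i ≤ n-2` (with `δ(n-1,1) = ∅`). -/
def allInitialFinalNFA (n : ℕ) : NFA (Fin 2) (Fin n) where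
  step i a :=
    if a = 0 then
      if i.val = 0 then {j | j.val = n - 1} else {j | j.val + 1 = i.val}
    else
      if i.val + 2 ≤ n then {j | j.val = i.val + 1} else ∅
  start := Set.univ
  accept := Set.univ

namespace NFA

variable {α σ : Type*} (M : NFA α σ)

theorem mem_acceptsFrom_iff_nonempty_inter {S : Set σ} {w : List α} :
    w ∈ M.acceptsFrom S ↔ (M.evalFrom S w ∩ M.accept).Nonempty := by
  simp only [mem_acceptsFrom, Set.Nonempty, Set.mem_inter_iff, and_comm]

theorem leftQuotient_accepts (u : List α) :
    M.accepts.leftQuotient u = M.acceptsFrom (M.eval u) :=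
  M.append_preimage_acceptsFrom

theorem exists_evalFrom_eq_sdiff
    (hremove : ∀ x, ∃ w, ∀ S, M.evalFrom S w = S \ {x}) (F : Finset σ) :
    ∃ w, ∀ S, M.evalFrom S w = S \ F := by
  classical
  induction F using Finset.induction_on with
  | empty => exact ⟨[], fun S => by simp⟩
  | insert x F _ ih =>
    obtain ⟨u, hu⟩ := ih
    obtain ⟨v, hv⟩ := hremove x
    refine ⟨u ++ v, fun S => ?_⟩
    rw [evalFrom_append, hu, hv, Finset.coe_insert, Set.insert_eq, Set.sdiff_sdiff,
      Set.union_comm]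

theorem eval_surjective_of_forall_exists_evalFrom_eq_sdiff_singleton [Finite σ]
    (hstart : M.start = Set.univ) (hremove : ∀ x, ∃ w, ∀ S, M.evalFrom S w = S \ {x}) :
    Function.Surjective M.eval := by
  intro S
  obtain ⟨w, hw⟩ := M.exists_evalFrom_eq_sdiff hremove (Set.toFinite Sᶜ).toFinset
  refine ⟨w, ?_⟩
  rw [eval, hw, hstart, Set.Finite.coe_toFinset, Set.sdiff_compl, Set.univ_inter]

theorem two_pow_card_le_card_of_dfa_accepts_eq [Fintype σ]
    (hreach : Function.Surjective M.eval) (hdist : Function.Injective M.acceptsFrom)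
    {τ : Type*} [Fintype τ] (D : DFA α τ) (hD : D.accepts = M.accepts) :
    2 ^ Fintype.card σ ≤ Fintype.card τ := by
  have hquot (w : List α) : M.acceptsFrom (M.eval w) = D.acceptsFrom (D.eval w) := by
    rw [← M.leftQuotient_accepts, ← hD, Language.leftQuotient_accepts, Function.comp_apply]
  choose u hu using hreach
  rw [← Fintype.card_set]
  refine Fintype.card_le_of_injective (D.eval ∘ u) fun S T h => hdist ?_
  rw [← hu S, ← hu T, hquot, hquot]
  exact congrArg D.acceptsFrom h

end NFA

namespace AllInitialFinalNFA

open Fin.NatCast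

theorem mem_step_one {n : ℕ} (i j : Fin n) :
    j ∈ (allInitialFinalNFA n).step i 1 ↔ i.val + 1 = j.val := by
  have := j.isLt
  simp only [allInitialFinalNFA, one_ne_zero, if_false]
  split_ifs <;> simp only [Set.mem_ofPred_eq, Set.mem_empty_iff_false, false_iff] <;> omega

theorem evalFrom_replicate_one {n : ℕ} (k : ℕ) (S : Set (Fin n)) :
    (allInitialFinalNFA n).evalFrom S (List.replicate k 1) =
      {j | ∃ i ∈ S, i.val + k = j.val} := by
  induction k generalizing S with
  | zero => ext j; simp [Fin.val_inj]
  | succ k ih =>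
    rw [List.replicate_succ, NFA.evalFrom_cons, ih]
    ext j
    simp only [Set.mem_ofPred_eq, NFA.mem_stepSet, mem_step_one]
    constructor
    · rintro ⟨i', ⟨i, hi, hii'⟩, hi'j⟩
      exact ⟨i, hi, by omega⟩
    · rintro ⟨i, hi, hij⟩
      have := j.isLt
      exact ⟨⟨i.val + 1, by omega⟩, ⟨i, hi, rfl⟩, by simp only; omega⟩

variable {m : ℕ}

theorem mem_step_zero (i j : Fin (m + 1)) :
    j ∈ (allInitialFinalNFA (m + 1)).step i 0 ↔ i = j + 1 := by
  have := j.isLt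
  simp only [allInitialFinalNFA, Fin.ext_iff, Fin.val_add_one, Fin.val_last]
  split_ifs <;> simp only [Set.mem_ofPred_eq] <;> omega

theorem evalFrom_replicate_zero (k : ℕ) (S : Set (Fin (m + 1))) :
    (allInitialFinalNFA (m + 1)).evalFrom S (List.replicate k 0) =
      (· + (k : Fin (m + 1))) ⁻¹' S := by
  induction k generalizing S with
  | zero => ext j; simp
  | succ k ih =>
    rw [List.replicate_succ, NFA.evalFrom_cons, ih]
    ext j
    simp only [Set.mem_preimage, NFA.mem_stepSet, mem_step_zero, exists_eq_right, Nat.cast_succ,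
      add_assoc]

theorem evalFrom_one_zero (S : Set (Fin (m + 1))) :
    (allInitialFinalNFA (m + 1)).evalFrom S [1, 0] = S \ {Fin.last m} := by
  ext j
  simp only [NFA.evalFrom_cons, NFA.evalFrom_nil, NFA.mem_stepSet, mem_step_zero, mem_step_one,
    exists_eq_right, Set.mem_sdiff, Set.mem_singleton_iff, Fin.val_add_one]
  split_ifs with hj
  · simp [hj]
  · simp [hj, Fin.val_inj]

def deletionWord {n : ℕ} (x : Fin n) : List (Fin 2) :=
  List.replicate (x.val + 1) 0 ++ [1, 0] ++ List.replicate (n - 1 - x.val) 0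

def separatingWord {n : ℕ} (x : Fin n) : List (Fin 2) :=
  List.replicate x.val 0 ++ List.replicate (n - 1) 1

theorem evalFrom_deletionWord {n : ℕ} (x : Fin n) (S : Set (Fin n)) :
    (allInitialFinalNFA n).evalFrom S (deletionWord x) = S \ {x} := by
  cases n with
  | zero => exact x.elim0
  | succ m =>
    have hround : ((m - x.val : ℕ) : Fin (m + 1)) + (x.val + 1 : ℕ) = 0 := by
      rw [← Nat.cast_add, show m - x.val + (x.val + 1) = m + 1 by omega, Fin.natCast_self]
    have hlast : x + ((m - x.val : ℕ) : Fin (m + 1)) = Fin.last m := by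
      rw [← Fin.natCast_eq_last, ← Fin.cast_val_eq_self x, ← Nat.cast_add, Fin.cast_val_eq_self,
        show x.val + (m - x.val) = m by omega]
    rw [deletionWord, Nat.add_sub_cancel, NFA.evalFrom_append, NFA.evalFrom_append,
      evalFrom_replicate_zero, evalFrom_one_zero, evalFrom_replicate_zero]
    ext j
    simp only [Set.mem_preimage, Set.mem_sdiff, Set.mem_singleton_iff, add_assoc, hround, add_zero,
      ← hlast, add_left_inj]

theorem separatingWord_mem_acceptsFrom {n : ℕ} (x : Fin n) (S : Set (Fin n)) :
    separatingWord x ∈ (allInitialFinalNFA n).acceptsFrom S ↔ x ∈ S := by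
  cases n with
  | zero => exact x.elim0
  | succ m =>
    have haccept : (allInitialFinalNFA (m + 1)).accept = .univ := rfl
    rw [separatingWord, NFA.mem_acceptsFrom_iff_nonempty_inter, haccept, Set.inter_univ,
      NFA.evalFrom_append, evalFrom_replicate_zero, evalFrom_replicate_one, Fin.cast_val_eq_self]
    constructor
    · rintro ⟨j, i, hi, hij⟩
      obtain rfl : i = 0 := Fin.ext (by have := j.isLt; simp only [Fin.val_zero]; omega)
      simpa using hi
    · intro hx
      exact ⟨Fin.last m, 0, by simpa using hx, by simp⟩

theorem acceptsFrom_injective (n : ℕ) :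
    Function.Injective (allInitialFinalNFA n).acceptsFrom := by
  intro S T h
  ext x
  rw [← separatingWord_mem_acceptsFrom x S, h, separatingWord_mem_acceptsFrom]

theorem eval_surjective (n : ℕ) : Function.Surjective (allInitialFinalNFA n).eval :=
  NFA.eval_surjective_of_forall_exists_evalFrom_eq_sdiff_singleton _ rfl
    fun x => ⟨deletionWord x, evalFrom_deletionWord x⟩

end AllInitialFinalNFA

theorem allInitialFinalNFA_blowup_general (n : ℕ) :
    (∀ S : Set (Fin n), ∃ w : List (Fin 2),
        (allInitialFinalNFA n).evalFrom (allInitialFinalNFA n).start w = S) ∧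
    (∀ S T : Set (Fin n), S ≠ T → ∃ w : List (Fin 2),
        ¬ ((((allInitialFinalNFA n).evalFrom S w) ∩ (allInitialFinalNFA n).accept).Nonempty ↔
           (((allInitialFinalNFA n).evalFrom T w) ∩ (allInitialFinalNFA n).accept).Nonempty)) ∧
    (∃ (τ : Type) (_ : Fintype τ) (D : DFA (Fin 2) τ),
        D.accepts = (allInitialFinalNFA n).accepts ∧ Fintype.card τ = 2 ^ n) ∧
    (∀ (τ : Type) (_ : Fintype τ) (D : DFA (Fin 2) τ),
        D.accepts = (allInitialFinalNFA n).accepts → 2 ^ n ≤ Fintype.card τ) := by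
  have hreach := AllInitialFinalNFA.eval_surjective n
  have hdist := AllInitialFinalNFA.acceptsFrom_injective n
  refine ⟨hreach, fun S T hST => ?_, ⟨Set (Fin n), inferInstance, _, NFA.toDFA_correct, by simp⟩,
    fun τ _ D hD => by
      simpa using NFA.two_pow_card_le_card_of_dfa_accepts_eq _ hreach hdist D hD⟩
  obtain ⟨w, hw⟩ := not_forall.mp fun h => hdist.ne hST (Set.ext h)
  refine ⟨w, ?_⟩
  rwa [← NFA.mem_acceptsFrom_iff_nonempty_inter, ← NFA.mem_acceptsFrom_iff_nonempty_inter]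

theorem allInitialFinalNFA_blowup (n : ℕ) (hn : 2 ≤ n) :
    (∀ S : Set (Fin n), ∃ w : List (Fin 2),
        (allInitialFinalNFA n).evalFrom (allInitialFinalNFA n).start w = S) ∧
    (∀ S T : Set (Fin n), S ≠ T → ∃ w : List (Fin 2),
        ¬ ((((allInitialFinalNFA n).evalFrom S w) ∩ (allInitialFinalNFA n).accept).Nonempty ↔
           (((allInitialFinalNFA n).evalFrom T w) ∩ (allInitialFinalNFA n).accept).Nonempty)) ∧
    (∃ (τ : Type) (_ : Fintype τ) (D : DFA (Fin 2) τ),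
        D.accepts = (allInitialFinalNFA n).accepts ∧ Fintype.card τ = 2 ^ n) ∧
    (∀ (τ : Type) (_ : Fintype τ) (D : DFA (Fin 2) τ),
        D.accepts = (allInitialFinalNFA n).accepts → 2 ^ n ≤ Fintype.card τ) :=
  allInitialFinalNFA_blowup_general n
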